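/- Let p be a positive Bernoulli distribution on {0,1}, let S ⊆ {0,1}* be a strategy, let n be a positive integer, and let u be any finite word over {0,1}. Then the set M_u = { w ∈ {0,1}^n : u is a prefix of S(w) } satisfies μ_p(M_u) ≤ μ_p(u). -/

import Mathlib

open Filter
open scoped Classical

/-- `μ_p(w)`: the probability of the finite word `w` under the Bernoulli distribution `p`. -/
def wordProb (p : Bool → ℝ) (w : List Bool) : ℝ := (w.map p).prod

/-- The word selected from `w` by the strategy `S ⊆ {0,1}*`: the symbols `w_j` (in order)
such that the prefix `w_1 … w_(j-1)` belongs to `S`. -/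
noncomputable def selectWord (S : Set (List Bool)) (w : List Bool) : List Bool :=
  (List.finRange w.length).filterMap fun (j : Fin w.length) =>
    if w.take (j : ℕ) ∈ S then some (w.get j) else none

/-!
Induction on `n`, for all strategies and words `u` at once, splitting a word as `a :: w`.
After the first symbol `a` the strategy `S` acts on the rest of the word as
`{v | a :: v ∈ S}`. If `S` does not select the first symbol, `μ_p(M_u)` is the
`p`-average over `a` of the same quantity for the shifted strategies; if it does, `u = b :: u'`
forces `a = b` and `μ_p(M_u) = p(b) μ_p(M_{u'})` for the shifted strategy; and `M_[]` is
everything, of mass `1`.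
-/

lemma wordProb_nonneg {p : Bool → ℝ} (hp : ∀ a, 0 ≤ p a) (w : List Bool) :
    0 ≤ wordProb p w :=
  List.prod_nonneg fun _ hx => by
    obtain ⟨a, -, rfl⟩ := List.mem_map.1 hx
    exact hp a

section Words

variable (p : Bool → ℝ)

lemma wordProb_nil : wordProb p [] = 1 := rfl

lemma wordProb_cons (a : Bool) (w : List Bool) : wordProb p (a :: w) = p a * wordProb p w :=
  List.prod_cons

lemma sum_wordProb_ofFn (n : ℕ) :
    ∑ w : Fin n → Bool, wordProb p (List.ofFn w) = (p false + p true) ^ n := by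
  simp only [wordProb, List.map_ofFn, List.prod_ofFn, Function.comp_apply]
  rw [← Fintype.prod_sum fun (_ : Fin n) a => p a, Fintype.sum_bool, Finset.prod_const,
    Finset.card_univ, Fintype.card_fin, add_comm]

end Words

lemma Fintype.sum_pi_fin_succ {α M : Type*} [Fintype α] [AddCommMonoid M] (n : ℕ)
    (f : (Fin (n + 1) → α) → M) :
    ∑ w, f w = ∑ a, ∑ w : Fin n → α, f (Fin.cons a w) := by
  rw [← (Fin.consEquiv fun _ => α).sum_comp, Fintype.sum_prod_type]
  rfl

lemma selectWord_nil (S : Set (List Bool)) : selectWord S [] = [] := rfl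

lemma selectWord_cons (S : Set (List Bool)) (a : Bool) (w : List Bool) :
    selectWord S (a :: w) = (if [] ∈ S then [a] else []) ++ selectWord {v | a :: v ∈ S} w := by
  simp only [selectWord, List.length_cons, List.finRange_succ, List.filterMap_cons,
    List.filterMap_map]
  -- `rfl` closes the remaining goals, whose sides differ only in their `Decidable` instances
  by_cases h : [] ∈ S <;> simp [h, Function.comp_def] <;> rfl

/-- `μ_p(M_u)` for words of length `n`. -/
noncomputable def prefixMass (p : Bool → ℝ) (S : Set (List Bool)) (u : List Bool) (n : ℕ) :
    ℝ :=
  ∑ w : Fin n → Bool, if u <+: selectWord S (List.ofFn w) then wordProb p (List.ofFn w) else 0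

section PrefixMass

variable (p : Bool → ℝ) {S : Set (List Bool)}

lemma prefixMass_zero (u : List Bool) : prefixMass p S u 0 = if u = [] then 1 else 0 := by
  simp [prefixMass, selectWord_nil, wordProb_nil]

lemma prefixMass_nil (n : ℕ) : prefixMass p S [] n = (p false + p true) ^ n := by
  simp only [prefixMass, List.nil_prefix, if_true, sum_wordProb_ofFn]

lemma prefixMass_succ_of_nil_notMem (hS : [] ∉ S) (u : List Bool) (n : ℕ) :
    prefixMass p S u (n + 1) = ∑ a, p a * prefixMass p {v | a :: v ∈ S} u n := by
  simp only [prefixMass, Fintype.sum_pi_fin_succ, List.ofFn_cons, selectWord_cons, if_neg hS,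
    List.nil_append, wordProb_cons, Finset.mul_sum, mul_ite, mul_zero]

lemma prefixMass_succ_cons_of_nil_mem (hS : [] ∈ S) (b : Bool) (u : List Bool) (n : ℕ) :
    prefixMass p S (b :: u) (n + 1) = p b * prefixMass p {v | b :: v ∈ S} u n := by
  simp only [prefixMass, Fintype.sum_pi_fin_succ, List.ofFn_cons, selectWord_cons, if_pos hS,
    List.singleton_append, List.cons_prefix_cons, wordProb_cons, Finset.mul_sum, mul_ite, mul_zero]
  rw [Fintype.sum_eq_single b fun a hab => by simp [Ne.symm hab]]
  simp

end PrefixMass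

lemma prefixMass_le_wordProb {p : Bool → ℝ} (hp : ∀ a, 0 ≤ p a)
    (hsum : p false + p true = 1) (S : Set (List Bool)) (u : List Bool) (n : ℕ) :
    prefixMass p S u n ≤ wordProb p u := by
  induction n generalizing S u with
  | zero =>
    rw [prefixMass_zero]
    split_ifs with hu
    · rw [hu, wordProb_nil]
    · exact wordProb_nonneg hp u
  | succ n ih =>
    by_cases hS : [] ∈ S
    · cases u with
      | nil => rw [prefixMass_nil, hsum, one_pow, wordProb_nil]
      | cons b u =>
        rw [prefixMass_succ_cons_of_nil_mem p hS, wordProb_cons]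
        exact mul_le_mul_of_nonneg_left (ih _ u) (hp b)
    · calc prefixMass p S u (n + 1)
          = ∑ a, p a * prefixMass p {v | a :: v ∈ S} u n :=
            prefixMass_succ_of_nil_notMem p hS u n
        _ ≤ ∑ a, p a * wordProb p u :=
          Finset.sum_le_sum fun a _ => mul_le_mul_of_nonneg_left (ih _ u) (hp a)
        _ = wordProb p u := by rw [← Finset.sum_mul, Fintype.sum_bool, add_comm, hsum, one_mul]

theorem mu_prefix_select_le_general (p : Bool → ℝ) (hpos : ∀ a, 0 < p a)
    (hsum : p false + p true = 1)
    (S : Set (List Bool)) (n : ℕ) (u : List Bool) :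
    (∑ w : Fin n → Bool,
        if u <+: selectWord S (List.ofFn w) then wordProb p (List.ofFn w) else 0) ≤
      wordProb p u :=
  prefixMass_le_wordProb (fun a => (hpos a).le) hsum S u n

/-- For any word `u`, the set `M_u = {w ∈ {0,1}^n : u is a prefix of S(w)}` satisfies
`μ_p(M_u) ≤ μ_p(u)`. -/
theorem mu_prefix_select_le (p : Bool → ℝ) (hpos : ∀ a, 0 < p a)
    (hsum : p false + p true = 1)
    (S : Set (List Bool)) (n : ℕ) (hn : 0 < n) (u : List Bool) :
    (∑ w : Fin n → Bool,
        if u <+: selectWord S (List.ofFn w) then wordProb p (List.ofFn w) else 0) ≤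
      wordProb p u :=
  mu_prefix_select_le_general p hpos hsum S n u
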